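/- arXiv:1106.1723 — 5 statements merged into one kernel-verified Lean document; each statement's English description precedes it below -/
import Mathlib

section
/- Let X = {1,2,3,4,5,6} and let C be the union of {{1,2}, {3,4}, {5,6}, {1,2,3}, {4,5,6}, {3,4,5}, {1,2,6}, {1,5,6}, {2,3,4}} with the set of the seven trivial clusters of X. Then C satisfies both necessary conditions from Lemma 1 — namely: (a) for all A, B ∈ C with B covering A in C, B \ A ∈ C; and (b) every C₀ ∈ C with |C₀| > 1 is the union of two disjoint members of C — yet C is not bureaucratic; indeed the hierarchy {{1,2}, {3,4}, {5,6}} does not extend to a maximum hierarchy on X using only elements of C. -/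
/-- A hierarchy on a finite set `X` (here, the type `α`): a collection of
nonempty subsets of `X` containing `X` itself, in which any two members
intersect in `∅` or in one of the two members. -/
def IsHierarchy {α : Type*} [Fintype α] [DecidableEq α] (H : Finset (Finset α)) : Prop :=
  ∅ ∉ H ∧ Finset.univ ∈ H ∧
    ∀ A ∈ H, ∀ B ∈ H, A ∩ B = ∅ ∨ A ∩ B = A ∨ A ∩ B = B

/-- A hierarchy is maximum if it has cardinality `2|X| - 1`. -/
def IsMaximumHierarchy {α : Type*} [Fintype α] [DecidableEq α] (H : Finset (Finset α)) : Prop :=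
  IsHierarchy H ∧ H.card = 2 * Fintype.card α - 1

/-- A collection `C` of subsets of `X` is bureaucratic if it is nonempty, does not
contain `∅`, and every hierarchy contained in `C` extends to a maximum hierarchy
contained in `C`. -/
def IsBureaucratic {α : Type*} [Fintype α] [DecidableEq α] (C : Set (Finset α)) : Prop :=
  C.Nonempty ∧ ∅ ∉ C ∧
    ∀ H : Finset (Finset α), ↑H ⊆ C → IsHierarchy H →
      ∃ H' : Finset (Finset α), H ⊆ H' ∧ ↑H' ⊆ C ∧ IsMaximumHierarchy H'

/-- The counterexample collection on `X = {1,…,6}` (represented by `Fin 6`, with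
`i` standing for `i+1`): the nine listed clusters together with the seven trivial ones. -/
def exampleC : Set (Finset (Fin 6)) :=
  {{0, 1}, {2, 3}, {4, 5}, {0, 1, 2}, {3, 4, 5}, {2, 3, 4}, {0, 1, 5}, {0, 4, 5}, {1, 2, 3},
    {0}, {1}, {2}, {3}, {4}, {5}, Finset.univ}

/-!
A maximum hierarchy on six points has eleven clusters. Every cluster of a hierarchy containing
`{1,2}`, `{3,4}` and `{5,6}` must be compatible with each of them, and the only members of `C`
with this property are these three pairs and the seven trivial clusters: the other six
non-trivial members each cut through one of the pairs. So at most ten clusters are available.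
-/

section Hierarchy

variable {α : Type*} [DecidableEq α]

def Compatible (A B : Finset α) : Prop :=
  A ∩ B = ∅ ∨ A ∩ B = A ∨ A ∩ B = B

instance : DecidableRel (Compatible (α := α)) := fun _ _ => by
  unfold Compatible; infer_instance

def compatibleWithin (C K : Finset (Finset α)) : Finset (Finset α) :=
  C.filter fun S => ∀ B ∈ K, Compatible S B

variable [Fintype α]

theorem IsHierarchy.subset_compatibleWithin {H C K : Finset (Finset α)} (hH : IsHierarchy H)
    (hHC : H ⊆ C) (hKH : K ⊆ H) : H ⊆ compatibleWithin C K :=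
  fun S hS => by
    simp only [compatibleWithin, Finset.mem_filter]
    exact ⟨hHC hS, fun B hB => hH.2.2 S hS B (hKH hB)⟩

theorem not_exists_isMaximumHierarchy_of_card_compatibleWithin_lt {C K : Finset (Finset α)}
    (hcard : (compatibleWithin C K).card < 2 * Fintype.card α - 1) :
    ¬ ∃ H : Finset (Finset α), K ⊆ H ∧ H ⊆ C ∧ IsMaximumHierarchy H := by
  rintro ⟨H, hKH, hHC, hH, hHcard⟩
  have := Finset.card_le_card (hH.subset_compatibleWithin hHC hKH)
  omega

theorem IsBureaucratic.exists_isMaximumHierarchy_superset {C : Set (Finset α)}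
    (hC : IsBureaucratic C) {K : Finset (Finset α)} (hKC : ↑(insert Finset.univ K) ⊆ C)
    (hK : IsHierarchy (insert Finset.univ K)) :
    ∃ H : Finset (Finset α), K ⊆ H ∧ ↑H ⊆ C ∧ IsMaximumHierarchy H := by
  obtain ⟨H, hKH, hHC, hH⟩ := hC.2.2 _ hKC hK
  exact ⟨H, (Finset.subset_insert _ _).trans hKH, hHC, hH⟩

end Hierarchy

def exampleCFinset : Finset (Finset (Fin 6)) :=
  {{0, 1}, {2, 3}, {4, 5}, {0, 1, 2}, {3, 4, 5}, {2, 3, 4}, {0, 1, 5}, {0, 4, 5}, {1, 2, 3},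
    {0}, {1}, {2}, {3}, {4}, {5}, Finset.univ}

theorem exampleC_eq_coe : exampleC = ↑exampleCFinset := by
  ext S; simp [exampleC, exampleCFinset]

def examplePairs : Finset (Finset (Fin 6)) :=
  {{0, 1}, {2, 3}, {4, 5}}

theorem card_compatibleWithin_exampleCFinset_examplePairs :
    (compatibleWithin exampleCFinset examplePairs).card = 10 := by
  decide

theorem not_exists_isMaximumHierarchy_exampleC_examplePairs :
    ¬ ∃ H : Finset (Finset (Fin 6)), examplePairs ⊆ H ∧ ↑H ⊆ exampleC ∧ IsMaximumHierarchy H := by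
  rw [exampleC_eq_coe]
  simp only [Finset.coe_subset]
  apply not_exists_isMaximumHierarchy_of_card_compatibleWithin_lt
  rw [card_compatibleWithin_exampleCFinset_examplePairs, Fintype.card_fin]
  norm_num

set_option maxRecDepth 2000 in
theorem exampleC_sdiff_mem_of_covBy : ∀ A ∈ exampleC, ∀ B ∈ exampleC, A ⊂ B →
    (¬∃ D ∈ exampleC, A ⊂ D ∧ D ⊂ B) → B \ A ∈ exampleC := by
  simp only [exampleC_eq_coe, Finset.mem_coe]
  decide

set_option maxRecDepth 2000 in
theorem exampleC_exists_disjoint_union : ∀ C₀ ∈ exampleC, 1 < C₀.card →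
    ∃ A ∈ exampleC, ∃ B ∈ exampleC, Disjoint A B ∧ C₀ = A ∪ B := by
  simp only [exampleC_eq_coe, Finset.mem_coe]
  decide

set_option maxRecDepth 2000 in
theorem not_isBureaucratic_exampleC : ¬ IsBureaucratic exampleC := fun h =>
  not_exists_isMaximumHierarchy_exampleC_examplePairs
    (h.exists_isMaximumHierarchy_superset
      (by rw [exampleC_eq_coe, Finset.coe_subset]; decide)
      (by unfold IsHierarchy; decide))

/-- `exampleC` satisfies both necessary conditions of Lemma 1 (the covering condition and
the disjoint-union condition) but is not bureaucratic: the hierarchy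
`{{1,2},{3,4},{5,6}}` does not extend to a maximum hierarchy inside `exampleC`. -/
theorem exampleC_not_bureaucratic :
    (∀ A ∈ exampleC, ∀ B ∈ exampleC, A ⊂ B → (¬∃ D ∈ exampleC, A ⊂ D ∧ D ⊂ B) →
        B \ A ∈ exampleC) ∧
    (∀ C₀ ∈ exampleC, 1 < C₀.card →
        ∃ A ∈ exampleC, ∃ B ∈ exampleC, Disjoint A B ∧ C₀ = A ∪ B) ∧
    ¬ IsBureaucratic exampleC ∧
    ¬ ∃ H' : Finset (Finset (Fin 6)),
        ({{0, 1}, {2, 3}, {4, 5}} : Finset (Finset (Fin 6))) ⊆ H' ∧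
        ↑H' ⊆ exampleC ∧ IsMaximumHierarchy H' :=
  ⟨exampleC_sdiff_mem_of_covBy, exampleC_exists_disjoint_union, not_isBureaucratic_exampleC,
    not_exists_isMaximumHierarchy_exampleC_examplePairs⟩
end

section
/- Let X = {1,2,3} and let T denote the set of trivial clusters of X. Then C₁ = T ∪ {{1,2}} and C₂ = T ∪ {{2,3}} are both bureaucratic collections of subsets of X, but their intersection C₁ ∩ C₂ = T is not bureaucratic. -/
/-- The trivial clusters of `X = {1,2,3}` (represented by `Fin 3`). -/
def trivial3 : Set (Finset (Fin 3)) := {{0}, {1}, {2}, Finset.univ}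

/-! A maximum hierarchy is trivially a bureaucracy: every hierarchy inside it extends to the
maximum hierarchy itself. Adding `{1,2}` or `{2,3}` to the trivial clusters of `{1,2,3}` gives a
maximum hierarchy (five clusters), while the four trivial clusters alone are too few to contain
one, although `{X}` is a hierarchy inside them. -/

section

variable {α : Type*} [Fintype α] [DecidableEq α]

theorem IsMaximumHierarchy.isBureaucratic {H₀ : Finset (Finset α)} (h : IsMaximumHierarchy H₀) :
    IsBureaucratic (H₀ : Set (Finset α)) :=
  ⟨⟨Finset.univ, h.1.2.1⟩, h.1.1, fun _ hH _ => ⟨H₀, Finset.coe_subset.mp hH, subset_rfl, h⟩⟩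

theorem IsBureaucratic.exists_isMaximumHierarchy_subset [Nonempty α] {C : Set (Finset α)}
    (hC : IsBureaucratic C) (huniv : Finset.univ ∈ C) :
    ∃ H : Finset (Finset α), ↑H ⊆ C ∧ IsMaximumHierarchy H := by
  have hsingle : IsHierarchy ({Finset.univ} : Finset (Finset α)) := by
    refine ⟨?_, Finset.mem_singleton_self _, by simp⟩
    simpa using Finset.univ_nonempty.ne_empty.symm
  obtain ⟨H, -, hHC, hmax⟩ := hC.2.2 {Finset.univ} (by simpa using huniv) hsingle
  exact ⟨H, hHC, hmax⟩

theorem not_isBureaucratic_of_ncard_lt {C : Set (Finset α)} (huniv : Finset.univ ∈ C)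
    (hcard : C.ncard < 2 * Fintype.card α - 1) : ¬ IsBureaucratic C := by
  intro hC
  have : Nonempty α := Fintype.card_pos_iff.mp (by omega)
  obtain ⟨H, hHC, -, hHcard⟩ := hC.exists_isMaximumHierarchy_subset huniv
  have := Set.ncard_le_ncard hHC
  rw [Set.ncard_coe_finset, hHcard] at this
  omega

end

theorem trivial3_eq_coe :
    trivial3 = ↑({{0}, {1}, {2}, Finset.univ} : Finset (Finset (Fin 3))) := by
  simp [trivial3]

/-- `T ∪ {{1,2}}` and `T ∪ {{2,3}}` are bureaucratic, but their intersection,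
the set `T` of trivial clusters, is not. -/
theorem inter_of_bureaucracies_not_bureaucratic :
    IsBureaucratic (insert ({0, 1} : Finset (Fin 3)) trivial3) ∧
    IsBureaucratic (insert ({1, 2} : Finset (Fin 3)) trivial3) ∧
    (insert ({0, 1} : Finset (Fin 3)) trivial3) ∩ (insert ({1, 2} : Finset (Fin 3)) trivial3)
      = trivial3 ∧
    ¬ IsBureaucratic trivial3 := by
  simp only [trivial3_eq_coe, ← Finset.coe_insert, ← Finset.coe_inter]
  refine ⟨?_, ?_, ?_, ?_⟩
  · exact IsMaximumHierarchy.isBureaucratic (by unfold IsMaximumHierarchy IsHierarchy; decide)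
  · exact IsMaximumHierarchy.isBureaucratic (by unfold IsMaximumHierarchy IsHierarchy; decide)
  · exact congrArg _ (by decide)
  · exact not_isBureaucratic_of_ncard_lt (by simp) (by rw [Set.ncard_coe_finset]; decide)
end

section
/- Let n ≥ 1 and let X = {1, 2, …, n}. The collection C of all intervals of X, i.e., all sets of the form [i, j] = {k : i ≤ k ≤ j} with 1 ≤ i ≤ j ≤ n, is bureaucratic. -/
/-!
Extend the given hierarchy to a maximal hierarchy `H` of intervals; it has `2|X| - 1` members.
Every singleton is compatible with everything, so it lies in `H`. A non-singleton member `A`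
splits at some point `c` into the two members `A ∩ (-∞, c]` and `A ∩ (c, ∞)`: a largest proper
member `L` of `A` containing `min A` is an initial segment of `A`, and `A \ L` is compatible with
every member, so maximality puts it in `H`. Splitting is a bijection between the non-singleton
members and the points that are not the maximum: a member splits at only one point, two members
splitting at the same point contain each other's halves, and a point `c` below some `y` is the
split point of the smallest member containing `c` and a point above it, since otherwise one of
its halves would be smaller. Hence `|H| = |X| + (|X| - 1)`.
-/

open Finset

theorem Finset.inter_eq_empty_or_eq_left_or_eq_right_iff {α : Type*} [DecidableEq α]
    {A B : Finset α} :
    (A ∩ B = ∅ ∨ A ∩ B = A ∨ A ∩ B = B) ↔ Disjoint A B ∨ A ⊆ B ∨ B ⊆ A := by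
  rw [disjoint_iff_inter_eq_empty, inter_eq_left, inter_eq_right]

section Hierarchy

variable {α : Type*} [Fintype α] [DecidableEq α] {H : Finset (Finset α)} {A B S : Finset α}

theorem IsHierarchy.disjoint_or_subset_or_superset (hH : IsHierarchy H) (hA : A ∈ H)
    (hB : B ∈ H) : Disjoint A B ∨ A ⊆ B ∨ B ⊆ A :=
  inter_eq_empty_or_eq_left_or_eq_right_iff.mp (hH.2.2 A hA B hB)

theorem IsHierarchy.subset_or_superset_of_mem (hH : IsHierarchy H) (hA : A ∈ H) (hB : B ∈ H)
    {x : α} (hxA : x ∈ A) (hxB : x ∈ B) : A ⊆ B ∨ B ⊆ A :=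
  (hH.disjoint_or_subset_or_superset hA hB).resolve_left
    (not_disjoint_iff.mpr ⟨x, hxA, hxB⟩)

theorem IsHierarchy.insert (hH : IsHierarchy H) (hS : S.Nonempty)
    (hcompat : ∀ B ∈ H, Disjoint B S ∨ B ⊆ S ∨ S ⊆ B) : IsHierarchy (insert S H) := by
  refine ⟨?_, mem_insert_of_mem hH.2.1, ?_⟩
  · rw [mem_insert, not_or]
    exact ⟨fun h => hS.ne_empty h.symm, hH.1⟩
  · simp only [mem_insert, forall_eq_or_imp, inter_eq_empty_or_eq_left_or_eq_right_iff]
    refine ⟨⟨.inr (.inl subset_rfl), fun B hB => ?_⟩,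
      fun A hA => ⟨hcompat A hA, fun B hB => hH.disjoint_or_subset_or_superset hA hB⟩⟩
    rcases hcompat B hB with h | h | h
    exacts [.inl h.symm, .inr (.inr h), .inr (.inl h)]

theorem IsHierarchy.compatible_sdiff_of_maximal {L : Finset α} (hH : IsHierarchy H) (hLH : L ∈ H)
    (hLA : L ⊆ A) (hL : ∀ B ∈ H, L ⊆ B → B ⊂ A → B ⊆ L) (hA : A ∈ H) (hB : B ∈ H) :
    Disjoint B (A \ L) ∨ B ⊆ A \ L ∨ A \ L ⊆ B := by
  rcases hH.disjoint_or_subset_or_superset hB hA with hBA | hBA | hAB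
  · exact .inl (hBA.mono_right sdiff_subset)
  · rcases hH.disjoint_or_subset_or_superset hB hLH with hBL | hBL | hLB
    · exact .inr (.inl (subset_sdiff.mpr ⟨hBA, hBL⟩))
    · exact .inl (disjoint_sdiff.mono_left hBL)
    · rcases hBA.eq_or_ssubset with rfl | hBA
      · exact .inr (.inr sdiff_subset)
      · exact .inl (disjoint_sdiff.mono_left (hL B hB hLB hBA))
  · exact .inr (.inr (sdiff_subset.trans hAB))

end Hierarchy

def intervals (α : Type*) [LinearOrder α] : Set (Finset α) :=
  {S | S.Nonempty ∧ (S : Set α).OrdConnected}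

section Intervals

variable {α : Type*} [LinearOrder α]

theorem exists_Icc_eq_iff_mem_intervals [LocallyFiniteOrder α] {S : Finset α} :
    (∃ i j, i ≤ j ∧ S = Icc i j) ↔ S ∈ intervals α := by
  constructor
  · rintro ⟨i, j, hij, rfl⟩
    exact ⟨nonempty_Icc.mpr hij, by rw [coe_Icc]; exact Set.ordConnected_Icc⟩
  · rintro ⟨hne, hconn⟩
    refine ⟨S.min' hne, S.max' hne, min'_le_max' S hne, subset_antisymm ?_ ?_⟩
    · exact fun x hx => mem_Icc.mpr ⟨min'_le S x hx, le_max' S x hx⟩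
    · exact fun x hx => hconn.out (min'_mem S hne) (max'_mem S hne) (mem_Icc.mp hx)

theorem singleton_mem_intervals (a : α) : {a} ∈ intervals α :=
  ⟨singleton_nonempty a, by rw [coe_singleton]; exact Set.ordConnected_singleton⟩

theorem filter_lt_mem_intervals {S : Finset α} (hS : S ∈ intervals α) {c : α}
    (hne : (S.filter (c < ·)).Nonempty) : S.filter (c < ·) ∈ intervals α := by
  refine ⟨hne, ?_⟩
  rw [coe_filter]
  exact hS.2.inter Set.ordConnected_Ioi

theorem filter_le_max'_eq {A L : Finset α} (hL : L ∈ intervals α) (hLA : L ⊆ A)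
    (hmin : A.min' (hL.1.mono hLA) ∈ L) : A.filter (· ≤ L.max' hL.1) = L := by
  ext x
  rw [mem_filter]
  refine ⟨fun ⟨hxA, hxc⟩ => hL.2.out hmin (max'_mem L hL.1) ⟨min'_le A x hxA, hxc⟩,
    fun hxL => ⟨hLA hxL, le_max' L x hxL⟩⟩

end Intervals

section SplitPoints

variable {α : Type*} [Fintype α] [LinearOrder α] {H : Finset (Finset α)} {A A' : Finset α}
  {c c' : α}

def Splits (H : Finset (Finset α)) (A : Finset α) (c : α) : Prop :=
  A.filter (· ≤ c) ∈ H ∧ A.filter (c < ·) ∈ H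

namespace Splits

theorem exists_le (hH : IsHierarchy H) (h : Splits H A c) : ∃ x ∈ A, x ≤ c := by
  obtain ⟨x, hx⟩ := nonempty_iff_ne_empty.mpr fun he => hH.1 (he ▸ h.1)
  exact ⟨x, mem_filter.mp hx⟩

theorem exists_gt (hH : IsHierarchy H) (h : Splits H A c) : ∃ y ∈ A, c < y := by
  obtain ⟨y, hy⟩ := nonempty_iff_ne_empty.mpr fun he => hH.1 (he ▸ h.2)
  exact ⟨y, mem_filter.mp hy⟩

theorem mem (hH : IsHierarchy H) (hA : A ∈ intervals α) (h : Splits H A c) : c ∈ A := by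
  obtain ⟨x, hxA, hxc⟩ := h.exists_le hH
  obtain ⟨y, hyA, hcy⟩ := h.exists_gt hH
  exact hA.2.out hxA hyA ⟨hxc, hcy.le⟩

theorem not_splits_of_lt (hH : IsHierarchy H) (hA : A ∈ intervals α) (h : Splits H A c)
    (hcc' : c < c') : ¬Splits H A c' := by
  intro h'
  have hc'A := h'.mem hH hA
  rcases hH.subset_or_superset_of_mem h'.1 h.2 (mem_filter.mpr ⟨hc'A, le_rfl⟩)
      (mem_filter.mpr ⟨hc'A, hcc'⟩) with hsub | hsub
  · obtain ⟨x, hxA, hxc⟩ := h.exists_le hH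
    have := (mem_filter.mp (hsub (mem_filter.mpr ⟨hxA, hxc.trans hcc'.le⟩))).2
    exact this.not_ge hxc
  · obtain ⟨y, hyA, hc'y⟩ := h'.exists_gt hH
    have := (mem_filter.mp (hsub (mem_filter.mpr ⟨hyA, hcc'.trans hc'y⟩))).2
    exact hc'y.not_ge this

theorem point_eq (hH : IsHierarchy H) (hA : A ∈ intervals α) (h : Splits H A c)
    (h' : Splits H A c') : c = c' :=
  le_antisymm (le_of_not_gt fun hc'c => h'.not_splits_of_lt hH hA hc'c h)
    (le_of_not_gt fun hcc' => h.not_splits_of_lt hH hA hcc' h')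

theorem eq_of_subset (hH : IsHierarchy H) (hA : A ∈ H) (hAI : A ∈ intervals α) (hAA' : A ⊆ A')
    (h : Splits H A c) (h' : Splits H A' c) : A = A' := by
  have hcA := h.mem hH hAI
  obtain ⟨y, hyA, hcy⟩ := h.exists_gt hH
  have hleft : A'.filter (· ≤ c) ⊆ A := by
    refine (hH.subset_or_superset_of_mem h'.1 hA (mem_filter.mpr ⟨hAA' hcA, le_rfl⟩)
      hcA).resolve_right fun hsub => ?_
    exact (mem_filter.mp (hsub hyA)).2.not_gt hcy
  have hright : A'.filter (c < ·) ⊆ A := by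
    refine (hH.subset_or_superset_of_mem h'.2 hA (mem_filter.mpr ⟨hAA' hyA, hcy⟩)
      hyA).resolve_right fun hsub => ?_
    exact lt_irrefl c (mem_filter.mp (hsub hcA)).2
  refine subset_antisymm hAA' fun x hx => ?_
  rcases le_or_gt x c with hxc | hcx
  · exact hleft (mem_filter.mpr ⟨hx, hxc⟩)
  · exact hright (mem_filter.mpr ⟨hx, hcx⟩)

theorem set_eq (hH : IsHierarchy H) (hHI : ↑H ⊆ intervals α) (hA : A ∈ H) (hA' : A' ∈ H)
    (h : Splits H A c) (h' : Splits H A' c) : A = A' := by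
  rcases hH.subset_or_superset_of_mem hA hA' (h.mem hH (hHI hA)) (h'.mem hH (hHI hA')) with
    hsub | hsub
  · exact h.eq_of_subset hH hA (hHI hA) hsub h'
  · exact (h'.eq_of_subset hH hA' (hHI hA') hsub h).symm

end Splits

end SplitPoints

section MaximalIntervalHierarchy

variable {α : Type*} [Fintype α] [LinearOrder α] {H : Finset (Finset α)} {A S : Finset α}

def IsIntervalHierarchy (H : Finset (Finset α)) : Prop :=
  ↑H ⊆ intervals α ∧ IsHierarchy H

variable (hmax : Maximal IsIntervalHierarchy H)
include hmax

theorem mem_of_maximal (hS : S ∈ intervals α)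
    (hcompat : ∀ B ∈ H, Disjoint B S ∨ B ⊆ S ∨ S ⊆ B) : S ∈ H := by
  have hins : IsIntervalHierarchy (insert S H) := by
    refine ⟨?_, hmax.prop.2.insert hS.1 hcompat⟩
    rw [coe_insert]
    exact Set.insert_subset hS hmax.prop.1
  rw [hmax.eq_of_le hins (subset_insert S H)]
  exact mem_insert_self S H

theorem singleton_mem_of_maximal (a : α) : {a} ∈ H := by
  refine mem_of_maximal hmax (singleton_mem_intervals a) fun B _ => ?_
  by_cases ha : a ∈ B
  · exact .inr (.inr (singleton_subset_iff.mpr ha))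
  · exact .inl (disjoint_singleton_right.mpr ha)

theorem exists_splits_of_maximal (hA : A ∈ H) (hA1 : 1 < A.card) : ∃ c, Splits H A c := by
  obtain ⟨hHI, hH⟩ := hmax.prop
  have hAne : A.Nonempty := (hHI hA).1
  set a := A.min' hAne
  have haA : a ∈ A := min'_mem A hAne
  have hsingleton : {a} ⊂ A := Finset.ssubset_iff_subset_ne.mpr ⟨singleton_subset_iff.mpr haA,
    fun h => by rw [← h, card_singleton] at hA1; exact lt_irrefl 1 hA1⟩
  obtain ⟨L, hL⟩ := exists_maximal (s := H.filter fun B => a ∈ B ∧ B ⊂ A)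
    ⟨{a}, mem_filter.mpr ⟨singleton_mem_of_maximal hmax a, mem_singleton_self a, hsingleton⟩⟩
  obtain ⟨hLH, haL, hLA⟩ := mem_filter.mp hL.prop
  have hLI : L ∈ intervals α := hHI hLH
  set c := L.max' hLI.1
  have hleft : A.filter (· ≤ c) = L := filter_le_max'_eq hLI hLA.subset haL
  have hright : A.filter (c < ·) = A \ L := by
    simp_rw [← not_le, filter_not, hleft]
  refine ⟨c, hleft ▸ hLH, hright ▸ mem_of_maximal hmax ?_ ?_⟩
  · obtain ⟨y, hyA, hyL⟩ := exists_of_ssubset hLA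
    exact hright ▸ filter_lt_mem_intervals (hHI hA) ⟨y, hright ▸ mem_sdiff.mpr ⟨hyA, hyL⟩⟩
  · refine fun B hB => hH.compatible_sdiff_of_maximal hLH hLA.subset (fun B hB hLB hBA => ?_) hA hB
    exact hL.2 (mem_filter.mpr ⟨hB, hLB haL, hBA⟩) hLB

theorem exists_splits_of_lt {c y : α} (hcy : c < y) : ∃ A ∈ H, Splits H A c := by
  obtain ⟨hHI, hH⟩ := hmax.prop
  obtain ⟨A, hA⟩ := exists_minimal (s := H.filter fun A => c ∈ A ∧ ∃ z ∈ A, c < z)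
    ⟨univ, mem_filter.mpr ⟨hH.2.1, mem_univ c, y, mem_univ y, hcy⟩⟩
  obtain ⟨hAH, hcA, z, hzA, hcz⟩ := mem_filter.mp hA.prop
  obtain ⟨c', hc'⟩ := exists_splits_of_maximal hmax hAH (one_lt_card.mpr ⟨c, hcA, z, hzA, hcz.ne⟩)
  refine ⟨A, hAH, ?_⟩
  rcases lt_trichotomy c c' with hcc' | rfl | hc'c
  · refine (hA.not_lt (mem_filter.mpr ⟨hc'.1, ?_⟩) ?_).elim
    · exact ⟨mem_filter.mpr ⟨hcA, hcc'.le⟩, c', mem_filter.mpr ⟨hc'.mem hH (hHI hAH), le_rfl⟩, hcc'⟩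
    · obtain ⟨x, hxA, hc'x⟩ := hc'.exists_gt hH
      exact filter_ssubset.mpr ⟨x, hxA, hc'x.not_ge⟩
  · exact hc'
  · refine (hA.not_lt (mem_filter.mpr ⟨hc'.2, ?_⟩) ?_).elim
    · exact ⟨mem_filter.mpr ⟨hcA, hc'c⟩, z, mem_filter.mpr ⟨hzA, hc'c.trans hcz⟩, hcz⟩
    · obtain ⟨x, hxA, hxc'⟩ := hc'.exists_le hH
      exact filter_ssubset.mpr ⟨x, hxA, hxc'.not_gt⟩

end MaximalIntervalHierarchy

section Counting

variable {α : Type*} [Fintype α] [LinearOrder α] {H : Finset (Finset α)}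

theorem card_filter_exists_lt_add_one [Nonempty α] :
    #(univ.filter fun c : α => ∃ y, c < y) + 1 = Fintype.card α := by
  have : univ.filter (fun c : α => ∃ y, c < y) = univ.erase (univ.max' univ_nonempty) := by
    ext c
    simp only [mem_filter, mem_univ, true_and, mem_erase, and_true]
    constructor
    · rintro ⟨y, hcy⟩ rfl
      exact hcy.not_ge (le_max' _ y (mem_univ y))
    · exact fun hc => ⟨_, lt_of_le_of_ne (le_max' _ c (mem_univ c)) hc⟩
  rw [this, card_erase_add_one (mem_univ _), card_univ]

variable (hmax : Maximal IsIntervalHierarchy H)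
include hmax

theorem card_filter_card_eq_one_of_maximal :
    #(H.filter fun A => A.card = 1) = Fintype.card α := by
  have : H.filter (fun A => A.card = 1) = univ.map ⟨singleton, singleton_injective⟩ := by
    ext A
    simp only [mem_filter, mem_map, mem_univ, true_and, Function.Embedding.coeFn_mk, card_eq_one]
    constructor
    · rintro ⟨-, a, rfl⟩
      exact ⟨a, rfl⟩
    · rintro ⟨a, rfl⟩
      exact ⟨singleton_mem_of_maximal hmax a, a, rfl⟩
  rw [this, card_map, card_univ]

theorem card_filter_card_ne_one_of_maximal :
    #(H.filter fun A => A.card ≠ 1) = #(univ.filter fun c : α => ∃ y, c < y) := by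
  obtain ⟨hHI, hH⟩ := hmax.prop
  refine le_antisymm (card_le_card_of_forall_subsingleton (Splits H) ?_ ?_)
    (card_le_card_of_forall_subsingleton' (Splits H) ?_ ?_)
  · intro A hA
    obtain ⟨hAH, hA1⟩ := mem_filter.mp hA
    obtain ⟨c, hc⟩ := exists_splits_of_maximal hmax hAH
      (lt_of_le_of_ne (hHI hAH).1.card_pos (Ne.symm hA1))
    obtain ⟨y, -, hcy⟩ := hc.exists_gt hH
    exact ⟨c, mem_filter.mpr ⟨mem_univ c, y, hcy⟩, hc⟩
  · intro c _ A hA A' hA'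
    exact hA.2.set_eq hH hHI (mem_filter.mp hA.1).1 (mem_filter.mp hA'.1).1 hA'.2
  · intro c hc
    obtain ⟨y, hcy⟩ := (mem_filter.mp hc).2
    obtain ⟨A, hAH, hA⟩ := exists_splits_of_lt hmax hcy
    obtain ⟨x, hxA, hxc⟩ := hA.exists_le hH
    obtain ⟨z, hzA, hcz⟩ := hA.exists_gt hH
    exact ⟨A, mem_filter.mpr ⟨hAH, (one_lt_card.mpr ⟨x, hxA, z, hzA, (hxc.trans_lt hcz).ne⟩).ne'⟩,
      hA⟩
  · intro A hA c hc c' hc'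
    exact hc.2.point_eq hH (hHI (mem_filter.mp hA).1) hc'.2

theorem card_of_maximal [Nonempty α] : #H = 2 * Fintype.card α - 1 := by
  have hsplit := card_filter_add_card_filter_not (s := H) (fun A => A.card = 1)
  rw [card_filter_card_eq_one_of_maximal hmax, card_filter_card_ne_one_of_maximal hmax] at hsplit
  have := card_filter_exists_lt_add_one (α := α)
  omega

end Counting

theorem isBureaucratic_intervals {α : Type*} [Fintype α] [LinearOrder α] [Nonempty α] :
    IsBureaucratic (intervals α) := by
  refine ⟨⟨_, singleton_mem_intervals (Classical.arbitrary α)⟩, fun h => not_nonempty_empty h.1, ?_⟩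
  intro H hHI hH
  obtain ⟨H', hHH', hmax⟩ := Finite.exists_le_maximal (p := IsIntervalHierarchy) ⟨hHI, hH⟩
  exact ⟨H', hHH', hmax.prop.1, hmax.prop.2, card_of_maximal hmax⟩

/-- The collection of all intervals of `{1,…,n}` (represented by `Fin n`) is
bureaucratic. -/
theorem intervals_bureaucratic (n : ℕ) (hn : 1 ≤ n) :
    IsBureaucratic {S : Finset (Fin n) | ∃ i j : Fin n, i ≤ j ∧ S = Finset.Icc i j} := by
  have : Nonempty (Fin n) := ⟨⟨0, hn⟩⟩
  have hC : {S : Finset (Fin n) | ∃ i j : Fin n, i ≤ j ∧ S = Finset.Icc i j} = intervals (Fin n) :=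
    Set.ext fun _ => exists_Icc_eq_iff_mem_intervals
  rw [hC]
  exact isBureaucratic_intervals
end

section
/- Let k ≥ 2 and let I₁, …, I_k be pairwise disjoint nonempty intervals of {1, …, n} whose union I₁ ∪ ⋯ ∪ I_k is again an interval of {1, …, n}. Then there exist distinct indices i, j such that I_i ∪ I_j is an interval of {1, …, n}. -/
/-!
Let `[a i, b i]` be the pieces and `[A, B]` their union. The piece containing `A` starts at or
before `A`, so every other piece lies strictly to its right; in particular it cannot reach `B`.
The successor of its right end is therefore still in `[A, B]`, and the piece containing it can
only start exactly there, so the two pieces are adjacent and their union is an interval.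
-/

/-- An interval of `{1,…,n}` (represented by `Fin n`): a set `[i,j] = {k : i ≤ k ≤ j}`. -/
def IsInterval {n : ℕ} (S : Finset (Fin n)) : Prop :=
  ∃ i j : Fin n, i ≤ j ∧ S = Finset.Icc i j

open Finset Order

section AdjacentIntervals

variable {α : Type*} [LinearOrder α] [LocallyFiniteOrder α] [SuccOrder α]

theorem Finset.Icc_union_Icc_succ_eq_Icc {a b c : α} (hab : a ≤ b) (hbc : succ b ≤ c) :
    Icc a b ∪ Icc (succ b) c = Icc a c := by
  ext x
  simp only [mem_union, mem_Icc]
  constructor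
  · rintro (⟨hax, hxb⟩ | ⟨hbx, hxc⟩)
    · exact ⟨hax, hxb.trans ((le_succ b).trans hbc)⟩
    · exact ⟨hab.trans ((le_succ b).trans hbx), hxc⟩
  · rintro ⟨hax, hxc⟩
    rcases le_or_gt x b with hxb | hbx
    · exact Or.inl ⟨hax, hxb⟩
    · exact Or.inr ⟨succ_le_of_lt hbx, hxc⟩

theorem exists_succ_eq_of_sup_Icc_eq_Icc {ι : Type*} [Fintype ι] [Nontrivial ι]
    {a b : ι → α} {A B : α} (hab : ∀ i, a i ≤ b i)
    (hdisj : Pairwise fun i j => Disjoint (Icc (a i) (b i)) (Icc (a j) (b j)))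
    (hU : univ.sup (fun i => Icc (a i) (b i)) = Icc A B) :
    ∃ i j, i ≠ j ∧ succ (b i) = a j := by
  have mem_U : ∀ {x}, x ∈ Icc A B ↔ ∃ i, x ∈ Icc (a i) (b i) := by
    intro x
    simp only [← hU, mem_sup, mem_univ, true_and]
  have bounds : ∀ i, A ≤ a i ∧ b i ≤ B := fun i =>
    ⟨(mem_Icc.1 (mem_U.2 ⟨i, left_mem_Icc.2 (hab i)⟩)).1,
      (mem_Icc.1 (mem_U.2 ⟨i, right_mem_Icc.2 (hab i)⟩)).2⟩
  obtain ⟨i⟩ : Nonempty ι := inferInstance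
  obtain ⟨i₀, hA⟩ := mem_U.1 (left_mem_Icc.2 ((bounds i).1.trans ((hab i).trans (bounds i).2)))
  have right_of_i₀ : ∀ j ≠ i₀, b i₀ < a j := by
    intro j hj
    by_contra! hle
    have hj₀ : a j ∈ Icc (a i₀) (b i₀) := mem_Icc.2 ⟨(mem_Icc.1 hA).1.trans (bounds j).1, hle⟩
    exact disjoint_left.1 (hdisj hj) (left_mem_Icc.2 (hab j)) hj₀
  obtain ⟨j, hj⟩ := exists_ne i₀
  have hB : b i₀ < B := (right_of_i₀ j hj).trans_le ((hab j).trans (bounds j).2)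
  obtain ⟨j₀, hsucc⟩ : ∃ j₀, succ (b i₀) ∈ Icc (a j₀) (b j₀) :=
    mem_U.1 (mem_Icc.2 ⟨(bounds i₀).1.trans ((hab i₀).trans (le_succ _)), succ_le_of_lt hB⟩)
  have hj₀ : j₀ ≠ i₀ := by
    rintro rfl
    exact (succ_le_iff_isMax.1 (mem_Icc.1 hsucc).2).not_lt hB
  exact ⟨i₀, j₀, hj₀.symm, le_antisymm (succ_le_of_lt (right_of_i₀ j₀ hj₀)) (mem_Icc.1 hsucc).1⟩

end AdjacentIntervals

theorem exists_union_isInterval_general {n k : ℕ} (hk : 2 ≤ k) (f : Fin k → Finset (Fin n))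
    (hint : ∀ i, IsInterval (f i))
    (hdisj : ∀ i j : Fin k, i ≠ j → Disjoint (f i) (f j))
    (hu : IsInterval (Finset.univ.sup f)) :
    ∃ i j : Fin k, i ≠ j ∧ IsInterval (f i ∪ f j) := by
  have : Nontrivial (Fin k) := Fin.nontrivial_iff_two_le.2 hk
  choose a b hab hf using hint
  obtain rfl : f = fun i => Icc (a i) (b i) := funext hf
  obtain ⟨A, B, -, hU⟩ := hu
  obtain ⟨i, j, hij, hsucc⟩ := exists_succ_eq_of_sup_Icc_eq_Icc hab hdisj hU
  have hsucc_le : succ (b i) ≤ b j := hsucc ▸ hab j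
  refine ⟨i, j, hij, a i, b j, (hab i).trans ((le_succ _).trans hsucc_le), ?_⟩
  simpa only [← hsucc] using Icc_union_Icc_succ_eq_Icc (hab i) hsucc_le

/-- If at least two pairwise disjoint nonempty intervals of `{1,…,n}` have union an
interval, then two of them have union an interval. -/
theorem exists_union_isInterval {n k : ℕ} (hk : 2 ≤ k) (f : Fin k → Finset (Fin n))
    (hint : ∀ i, IsInterval (f i)) (hne : ∀ i, (f i).Nonempty)
    (hdisj : ∀ i j : Fin k, i ≠ j → Disjoint (f i) (f j))
    (hu : IsInterval (Finset.univ.sup f)) :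
    ∃ i j : Fin k, i ≠ j ∧ IsInterval (f i ∪ f j) :=
  exists_union_isInterval_general hk f hint hdisj hu
end

section
/- Let X be a finite nonempty set and let H be a hierarchy on X. Then |H| = 2|X| − 1 if and only if (i) H contains all trivial clusters of X, and (ii) every set C ∈ H with |C| > 1 can be written as a disjoint union C = A ⊔ B of two sets A, B ∈ H. -/
/-!
Order a hierarchy `H` on `S` by inclusion: the maximal members of `H` strictly below `S` are
pairwise disjoint, and every member other than `S` lies below exactly one of them. Hence
`|H| + k = 1 + ∑ (|H_A| + 1)` over these `k` children `A`, where `H_A` is the restriction of `H`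
to `A`. Induction on `S` gives `|H| + 1 ≤ 2|S|`: the children have total size at most `|S|`, and
strictly less when `k ≤ 1`. Equality forces either `S` to be a singleton with `H = {S}`, or
exactly two children, both tight, partitioning `S`; this is the binary structure. Conversely a
split `S = A ⊔ B` gives `H ⊇ {S} ⊔ H_A ⊔ H_B`, and induction yields `2|S| ≤ |H| + 1`.
-/

section

variable {α : Type*}

structure IsHierarchyOn (S : Finset α) (H : Finset (Finset α)) : Prop where
  empty_notMem : ∅ ∉ H
  self_mem : S ∈ H
  subset_of_mem : ∀ ⦃A⦄, A ∈ H → A ⊆ S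
  laminar : ∀ ⦃A⦄, A ∈ H → ∀ ⦃B⦄, B ∈ H → Disjoint A B ∨ A ⊆ B ∨ B ⊆ A

theorem IsHierarchyOn.nonempty_of_mem {S A : Finset α} {H : Finset (Finset α)}
    (hH : IsHierarchyOn S H) (hA : A ∈ H) : A.Nonempty :=
  Finset.nonempty_iff_ne_empty.mpr fun h => hH.empty_notMem (h ▸ hA)

variable [DecidableEq α]

structure IsBinaryOn (S : Finset α) (H : Finset (Finset α)) : Prop where
  singleton_mem : ∀ x ∈ S, {x} ∈ H
  exists_split : ∀ C ∈ H, 1 < C.card → ∃ A ∈ H, ∃ B ∈ H, Disjoint A B ∧ C = A ∪ B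

def childClusters (H : Finset (Finset α)) (S : Finset α) : Finset (Finset α) :=
  {A ∈ H | A ⊂ S ∧ ∀ B ∈ H, B ⊂ S → ¬ A ⊂ B}

theorem IsBinaryOn.restrict {S A : Finset α} {H : Finset (Finset α)} (hb : IsBinaryOn S H)
    (hAS : A ⊆ S) :
    IsBinaryOn A (H.filter (· ⊆ A)) := by
  refine ⟨fun x hx => Finset.mem_filter.mpr ⟨hb.singleton_mem x (hAS hx),
    Finset.singleton_subset_iff.mpr hx⟩, fun C hC hC1 => ?_⟩
  obtain ⟨hCH, hCA⟩ := Finset.mem_filter.mp hC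
  obtain ⟨A', hA', B', hB', hd, rfl⟩ := hb.exists_split C hCH hC1
  exact ⟨A', Finset.mem_filter.mpr ⟨hA', Finset.subset_union_left.trans hCA⟩,
    B', Finset.mem_filter.mpr ⟨hB', Finset.subset_union_right.trans hCA⟩, hd, rfl⟩

theorem IsHierarchy.isHierarchyOn_univ [Fintype α] {H : Finset (Finset α)}
    (hH : IsHierarchy H) : IsHierarchyOn Finset.univ H := by
  obtain ⟨hne, huniv, hlam⟩ := hH
  refine ⟨hne, huniv, fun A _ => Finset.subset_univ A, fun A hA B hB => ?_⟩
  rw [Finset.disjoint_iff_inter_eq_empty, ← Finset.inter_eq_left, ← Finset.inter_eq_right]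
  exact hlam A hA B hB

namespace IsHierarchyOn

variable {S A B : Finset α} {H : Finset (Finset α)}

theorem restrict (hH : IsHierarchyOn S H) (hA : A ∈ H) :
    IsHierarchyOn A (H.filter (· ⊆ A)) where
  empty_notMem h := hH.empty_notMem (Finset.mem_filter.mp h).1
  self_mem := Finset.mem_filter.mpr ⟨hA, subset_rfl⟩
  subset_of_mem _ hB := (Finset.mem_filter.mp hB).2
  laminar _ hB _ hC := hH.laminar (Finset.mem_filter.mp hB).1 (Finset.mem_filter.mp hC).1

theorem disjoint_filter_subset (hH : IsHierarchyOn S H) (hAB : Disjoint A B) :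
    Disjoint (H.filter (· ⊆ A)) (H.filter (· ⊆ B)) := by
  refine Finset.disjoint_left.mpr fun C hCA hCB => ?_
  rw [Finset.mem_filter] at hCA hCB
  obtain ⟨x, hx⟩ := hH.nonempty_of_mem hCA.1
  exact Finset.disjoint_left.mp hAB (hCA.2 hx) (hCB.2 hx)

theorem childClusters_subset : childClusters H S ⊆ H :=
  Finset.filter_subset _ _

theorem ssubset_of_mem_childClusters (hA : A ∈ childClusters H S) : A ⊂ S :=
  (Finset.mem_filter.mp hA).2.1

theorem exists_mem_childClusters_superset (hB : B ∈ H) (hBS : B ⊂ S) :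
    ∃ A ∈ childClusters H S, B ⊆ A := by
  obtain ⟨A, hA, hmax⟩ := (H.filter fun D => B ⊆ D ∧ D ⊂ S).exists_max_image Finset.card
    ⟨B, Finset.mem_filter.mpr ⟨hB, subset_rfl, hBS⟩⟩
  obtain ⟨hAH, hBA, hAS⟩ := Finset.mem_filter.mp hA
  refine ⟨A, Finset.mem_filter.mpr ⟨hAH, hAS, fun D hD hDS hAD => ?_⟩, hBA⟩
  have hle := hmax D (Finset.mem_filter.mpr ⟨hD, hBA.trans hAD.subset, hDS⟩)
  exact hle.not_gt (Finset.card_lt_card hAD)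

theorem pairwiseDisjoint_childClusters (hH : IsHierarchyOn S H) :
    (childClusters H S : Set (Finset α)).PairwiseDisjoint id := by
  intro A hA A' hA' hne
  obtain ⟨hAH, hAS, hAmax⟩ := Finset.mem_filter.mp hA
  obtain ⟨hA'H, hA'S, hA'max⟩ := Finset.mem_filter.mp hA'
  rcases hH.laminar hAH hA'H with h | h | h
  · exact h
  · exact absurd (Finset.ssubset_iff_subset_ne.mpr ⟨h, hne⟩) (hAmax A' hA'H hA'S)
  · exact absurd (Finset.ssubset_iff_subset_ne.mpr ⟨h, hne.symm⟩) (hA'max A hAH hAS)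

theorem card_add_card_childClusters (hH : IsHierarchyOn S H) :
    H.card + (childClusters H S).card =
      1 + ∑ A ∈ childClusters H S, ((H.filter (· ⊆ A)).card + 1) := by
  have hpieces : H.erase S = (childClusters H S).biUnion fun A => H.filter (· ⊆ A) := by
    ext D
    simp only [Finset.mem_erase, Finset.mem_biUnion, Finset.mem_filter]
    constructor
    · rintro ⟨hDS, hD⟩
      obtain ⟨A, hA, hDA⟩ := exists_mem_childClusters_superset hD
        (Finset.ssubset_iff_subset_ne.mpr ⟨hH.subset_of_mem hD, hDS⟩)
      exact ⟨A, hA, hD, hDA⟩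
    · rintro ⟨A, hA, hD, hDA⟩
      exact ⟨fun h => (ssubset_of_mem_childClusters hA).not_subset (h ▸ hDA), hD⟩
  have hdisj : (childClusters H S : Set (Finset α)).PairwiseDisjoint
      fun A => H.filter (· ⊆ A) := fun A hA A' hA' hne =>
    hH.disjoint_filter_subset (hH.pairwiseDisjoint_childClusters hA hA' hne)
  have hcard := congrArg Finset.card hpieces
  rw [Finset.card_erase_of_mem hH.self_mem, Finset.card_biUnion hdisj] at hcard
  have hpos := Finset.card_pos.mpr ⟨S, hH.self_mem⟩
  rw [Finset.sum_add_distrib, Finset.sum_const, smul_eq_mul, mul_one]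
  omega

theorem sum_card_childClusters_le (hH : IsHierarchyOn S H) :
    ∑ A ∈ childClusters H S, A.card ≤ S.card := by
  calc ∑ A ∈ childClusters H S, A.card = ((childClusters H S).biUnion id).card :=
        (Finset.card_biUnion hH.pairwiseDisjoint_childClusters).symm
    _ ≤ S.card := Finset.card_le_card <| Finset.biUnion_subset.mpr fun A hA =>
        (ssubset_of_mem_childClusters hA).subset

theorem sum_card_childClusters_lt_of_card_le_one (hH : IsHierarchyOn S H)
    (hk : (childClusters H S).card ≤ 1) : ∑ A ∈ childClusters H S, A.card < S.card := by
  obtain hK | ⟨A, hA⟩ := (childClusters H S).eq_empty_or_nonempty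
  · rw [hK, Finset.sum_empty]
    exact Finset.card_pos.mpr (hH.nonempty_of_mem hH.self_mem)
  · have hK : childClusters H S = {A} := Finset.eq_singleton_iff_unique_mem.mpr
      ⟨hA, fun D hD => Finset.card_le_one.mp hk D hD A hA⟩
    rw [hK, Finset.sum_singleton]
    exact Finset.card_lt_card (ssubset_of_mem_childClusters hA)

theorem card_add_one_le (hH : IsHierarchyOn S H) : H.card + 1 ≤ 2 * S.card := by
  induction S using Finset.strongInduction generalizing H with
  | H S ih =>
  have hchildren : ∑ A ∈ childClusters H S, ((H.filter (· ⊆ A)).card + 1) ≤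
      2 * ∑ A ∈ childClusters H S, A.card := by
    rw [Finset.mul_sum]
    exact Finset.sum_le_sum fun A hA =>
      ih A (ssubset_of_mem_childClusters hA) (hH.restrict (childClusters_subset hA))
  have hdecomp := hH.card_add_card_childClusters
  have hsum := hH.sum_card_childClusters_le
  have hlt := hH.sum_card_childClusters_lt_of_card_le_one
  omega

theorem isBinaryOn_of_card_eq_one (hH : IsHierarchyOn S H) (hH1 : H.card = 1)
    (hS1 : S.card = 1) : IsBinaryOn S H := by
  have hmem : ∀ C ∈ H, C = S := fun C hC => Finset.card_le_one.mp hH1.le C hC S hH.self_mem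
  obtain ⟨x, rfl⟩ := Finset.card_eq_one.mp hS1
  refine ⟨fun y hy => Finset.mem_singleton.mp hy ▸ hH.self_mem, fun C hC hC1 => ?_⟩
  rw [hmem C hC, Finset.card_singleton] at hC1
  exact absurd hC1 (lt_irrefl 1)

theorem isBinaryOn_of_childClusters_eq_pair (hH : IsHierarchyOn S H)
    (hK : childClusters H S = {A, B}) (hAB : A ≠ B) (hcard : A.card + B.card = S.card)
    (hbA : IsBinaryOn A (H.filter (· ⊆ A))) (hbB : IsBinaryOn B (H.filter (· ⊆ B))) :
    IsBinaryOn S H := by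
  have hA : A ∈ childClusters H S := hK ▸ Finset.mem_insert_self A {B}
  have hB : B ∈ childClusters H S := hK ▸ Finset.mem_insert_of_mem (Finset.mem_singleton_self B)
  have hdisj : Disjoint A B := hH.pairwiseDisjoint_childClusters hA hB hAB
  have hunion : A ∪ B = S := Finset.eq_of_subset_of_card_le
    (Finset.union_subset (ssubset_of_mem_childClusters hA).subset
      (ssubset_of_mem_childClusters hB).subset)
    (by rw [Finset.card_union_of_disjoint hdisj, hcard])
  have hfilter {D : Finset α} : H.filter (· ⊆ D) ⊆ H := Finset.filter_subset _ _
  refine ⟨fun x hx => ?_, fun C hC hC1 => ?_⟩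
  · rcases Finset.mem_union.mp (hunion ▸ hx) with hxA | hxB
    · exact hfilter (hbA.singleton_mem x hxA)
    · exact hfilter (hbB.singleton_mem x hxB)
  obtain rfl | hCS := eq_or_ne C S
  · exact ⟨A, childClusters_subset hA, B, childClusters_subset hB, hdisj, hunion.symm⟩
  obtain ⟨D, hD, hCD⟩ := exists_mem_childClusters_superset hC
    (Finset.ssubset_iff_subset_ne.mpr ⟨hH.subset_of_mem hC, hCS⟩)
  have hb : IsBinaryOn D (H.filter (· ⊆ D)) := by
    rcases Finset.mem_insert.mp (hK ▸ hD) with rfl | hDB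
    · exact hbA
    · exact Finset.mem_singleton.mp hDB ▸ hbB
  obtain ⟨A', hA', B', hB', hd, hsplit⟩ :=
    hb.exists_split C (Finset.mem_filter.mpr ⟨hC, hCD⟩) hC1
  exact ⟨A', hfilter hA', B', hfilter hB', hd, hsplit⟩

theorem isBinaryOn_of_card_add_one_eq (hH : IsHierarchyOn S H)
    (htight : H.card + 1 = 2 * S.card) : IsBinaryOn S H := by
  induction S using Finset.strongInduction generalizing H with
  | H S ih =>
  have hbound : ∀ A ∈ childClusters H S, (H.filter (· ⊆ A)).card + 1 ≤ 2 * A.card :=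
    fun A hA => (hH.restrict (childClusters_subset hA)).card_add_one_le
  have hchildren : ∑ A ∈ childClusters H S, ((H.filter (· ⊆ A)).card + 1) ≤
      2 * ∑ A ∈ childClusters H S, A.card := by
    rw [Finset.mul_sum]
    exact Finset.sum_le_sum hbound
  have hdecomp := hH.card_add_card_childClusters
  have hsum := hH.sum_card_childClusters_le
  have hlt := hH.sum_card_childClusters_lt_of_card_le_one
  obtain hk | hk : (childClusters H S).card = 0 ∨ (childClusters H S).card = 2 := by omega
  · rw [Finset.card_eq_zero.mp hk, Finset.sum_empty] at hdecomp
    exact hH.isBinaryOn_of_card_eq_one (by omega) (by omega)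
  obtain ⟨A, B, hAB, hK⟩ := Finset.card_eq_two.mp hk
  have hA : A ∈ childClusters H S := hK ▸ Finset.mem_insert_self A {B}
  have hB : B ∈ childClusters H S := hK ▸ Finset.mem_insert_of_mem (Finset.mem_singleton_self B)
  have hbA := hbound A hA
  have hbB := hbound B hB
  rw [hk, hK, Finset.sum_pair hAB] at hdecomp
  rw [hK, Finset.sum_pair hAB] at hsum
  exact hH.isBinaryOn_of_childClusters_eq_pair hK hAB (by omega)
    (ih A (ssubset_of_mem_childClusters hA) (hH.restrict (childClusters_subset hA)) (by omega))
    (ih B (ssubset_of_mem_childClusters hB) (hH.restrict (childClusters_subset hB)) (by omega))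

theorem two_mul_card_le (hH : IsHierarchyOn S H) (hb : IsBinaryOn S H) :
    2 * S.card ≤ H.card + 1 := by
  induction S using Finset.strongInduction generalizing H with
  | H S ih =>
  obtain hS1 | hS1 := le_or_gt S.card 1
  · have hpos := Finset.card_pos.mpr ⟨S, hH.self_mem⟩
    omega
  obtain ⟨A, hA, B, hB, hAB, rfl⟩ := hb.exists_split _ hH.self_mem hS1
  obtain ⟨a, haA⟩ := hH.nonempty_of_mem hA
  obtain ⟨b, hbB⟩ := hH.nonempty_of_mem hB
  have hAS : A ⊂ A ∪ B := (Finset.ssubset_iff_of_subset Finset.subset_union_left).mpr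
    ⟨b, Finset.mem_union_right A hbB, Finset.disjoint_right.mp hAB hbB⟩
  have hBS : B ⊂ A ∪ B := (Finset.ssubset_iff_of_subset Finset.subset_union_right).mpr
    ⟨a, Finset.mem_union_left B haA, Finset.disjoint_left.mp hAB haA⟩
  have ihA := ih A hAS (hH.restrict hA) (hb.restrict hAS.subset)
  have ihB := ih B hBS (hH.restrict hB) (hb.restrict hBS.subset)
  have hsub : insert (A ∪ B) (H.filter (· ⊆ A) ∪ H.filter (· ⊆ B)) ⊆ H :=
    Finset.insert_subset hH.self_mem
      (Finset.union_subset (Finset.filter_subset _ _) (Finset.filter_subset _ _))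
  have hnotMem : A ∪ B ∉ H.filter (· ⊆ A) ∪ H.filter (· ⊆ B) := by
    simp only [Finset.mem_union, Finset.mem_filter, not_or, not_and]
    exact ⟨fun _ => hAS.not_subset, fun _ => hBS.not_subset⟩
  have hcard := Finset.card_le_card hsub
  rw [Finset.card_insert_of_notMem hnotMem,
    Finset.card_union_of_disjoint (hH.disjoint_filter_subset hAB)] at hcard
  rw [Finset.card_union_of_disjoint hAB]
  omega

theorem card_add_one_eq_iff (hH : IsHierarchyOn S H) :
    H.card + 1 = 2 * S.card ↔ IsBinaryOn S H :=
  ⟨hH.isBinaryOn_of_card_add_one_eq, fun hb =>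
    hH.card_add_one_le.antisymm (hH.two_mul_card_le hb)⟩

end IsHierarchyOn

end

theorem hierarchy_maximum_iff_general {α : Type*} [Fintype α] [DecidableEq α]
    (H : Finset (Finset α)) (hH : IsHierarchy H) :
    H.card = 2 * Fintype.card α - 1 ↔
      (((∀ x : α, {x} ∈ H) ∧ Finset.univ ∈ H) ∧
        ∀ C ∈ H, 1 < C.card → ∃ A ∈ H, ∃ B ∈ H, Disjoint A B ∧ C = A ∪ B) := by
  have hH' := hH.isHierarchyOn_univ
  have hpos := Finset.card_pos.mpr (hH'.nonempty_of_mem hH'.self_mem)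
  rw [Finset.card_univ] at hpos
  rw [show H.card = 2 * Fintype.card α - 1 ↔ H.card + 1 = 2 * (Finset.univ : Finset α).card by
    rw [Finset.card_univ]; omega, hH'.card_add_one_eq_iff]
  exact ⟨fun hb => ⟨⟨fun x => hb.singleton_mem x (Finset.mem_univ x), hH'.self_mem⟩,
    hb.exists_split⟩, fun ⟨⟨hsing, _⟩, hsplit⟩ => ⟨fun x _ => hsing x, hsplit⟩⟩

/-- A hierarchy `H` on `X` is maximum (i.e. `|H| = 2|X| - 1`) iff it contains all trivial
clusters and every member of size `> 1` is a disjoint union of two members of `H`. -/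
theorem hierarchy_maximum_iff {α : Type*} [Fintype α] [DecidableEq α] [Nonempty α]
    (H : Finset (Finset α)) (hH : IsHierarchy H) :
    H.card = 2 * Fintype.card α - 1 ↔
      (((∀ x : α, {x} ∈ H) ∧ Finset.univ ∈ H) ∧
        ∀ C ∈ H, 1 < C.card → ∃ A ∈ H, ∃ B ∈ H, Disjoint A B ∧ C = A ∪ B) :=
  hierarchy_maximum_iff_general H hH
end
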